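/- Every tree T on n vertices satisfies τ(T) ≤ 3n²/4 − n/2, with equality when T is the path P_n and n is even. -/

import Mathlib

/-!
Let `p` be a longest path of the tree, of length `d`. Each vertex `x` has a gate on `p`, its closest
vertex `y` on `p`: every distance from `x` to a vertex of `p` passes through `y`. As `p` is longest,
`dist x y` is at most the distance from `y` to either end of `p`, so the vertex at position `k` of `p`
has eccentricity exactly `max k (d - k)`. Hence the vertices of `p` contribute `τ(P_{d+1})` and each
of the other `n - d - 1` vertices at most `d`, and `4 (τ(P_{d+1}) + (n - d - 1) d) ≤ 3n² - 2n` for all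
`d < n`. If `T ≅ P_n` then `d = n - 1`, every vertex lies on `p`, and for even `n` the last inequality
is an equality.
-/

open SimpleGraph Finset

noncomputable def ecc {V : Type*} [Fintype V] (G : SimpleGraph V) (v : V) : ℕ :=
  Finset.univ.sup (G.dist v)

noncomputable def tau {V : Type*} [Fintype V] (G : SimpleGraph V) : ℕ :=
  ∑ v, ecc G v

-- `τ(P_{d+1})`: the vertex of the path at distance `k` from one end has eccentricity `max k (d - k)`.
def pathTau (d : ℕ) : ℕ := ∑ k ∈ range (d + 1), max k (d - k)

lemma pathTau_add_two (d : ℕ) : pathTau (d + 2) = pathTau d + 3 * d + 5 := by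
  have hmid : ∀ k ∈ range (d + 1), max (k + 1) (d + 2 - (k + 1)) = max k (d - k) + 1 := by
    intro k hk
    rw [mem_range] at hk
    rw [show d + 2 - (k + 1) = d - k + 1 by omega, Nat.succ_max_succ]
  rw [pathTau, sum_range_succ, sum_range_succ', sum_congr rfl hmid, sum_add_distrib, pathTau]
  simp only [sum_const, card_range, smul_eq_mul, mul_one, tsub_zero, tsub_self, le_add_iff_nonneg_left,
    zero_le, sup_of_le_left, sup_of_le_right]
  omega

lemma four_mul_pathTau_add_mod (d : ℕ) : 4 * pathTau d + (d + 1) % 2 = 3 * d ^ 2 + 4 * d + 1 := by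
  induction d using Nat.twoStepInduction with
  | zero => simp [pathTau]
  | one => simp [pathTau, sum_range_succ]
  | more d ih _ =>
    rw [pathTau_add_two]
    have : (d + 2 + 1) % 2 = (d + 1) % 2 := by omega
    nlinarith

lemma four_mul_pathTau_add_le {d n : ℕ} (hdn : d + 1 ≤ n) :
    4 * (pathTau d + (n - (d + 1)) * d) ≤ 3 * n ^ 2 - 2 * n := by
  obtain ⟨e, rfl⟩ := Nat.exists_eq_add_of_le hdn
  have hd : 4 * pathTau d ≤ 3 * d ^ 2 + 4 * d + 1 := by
    have := four_mul_pathTau_add_mod d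
    omega
  rw [Nat.add_sub_cancel_left]
  apply Nat.le_sub_of_add_le
  nlinarith

lemma dist_le_ecc {V : Type*} [Fintype V] (G : SimpleGraph V) (v x : V) : G.dist v x ≤ ecc G v :=
  le_sup (mem_univ x)

lemma ecc_le {V : Type*} [Fintype V] {G : SimpleGraph V} {v : V} {k : ℕ}
    (h : ∀ x, G.dist v x ≤ k) : ecc G v ≤ k :=
  Finset.sup_le fun x _ => h x

namespace SimpleGraph

variable {V : Type*} {G : SimpleGraph V} {u v w : V}

lemma Walk.IsPath.append {p : G.Walk u v} {q : G.Walk v w} (hp : p.IsPath) (hq : q.IsPath)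
    (h : ∀ x ∈ p.support, x ∈ q.support → x = v) : (p.append q).IsPath := by
  rw [Walk.isPath_def, Walk.support_append]
  refine hp.support_nodup.append hq.support_nodup.tail fun x hxp hxq => ?_
  obtain rfl := h x hxp (List.mem_of_mem_tail hxq)
  have := hq.support_nodup
  rw [← q.cons_tail_support] at this
  exact (List.nodup_cons.mp this).1 hxq

lemma Reachable.dist_map_le {W : Type*} {H : SimpleGraph W} (f : G →g H) (h : G.Reachable u v) :
    H.dist (f u) (f v) ≤ G.dist u v := by
  obtain ⟨p, hp⟩ := h.exists_walk_length_eq_dist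
  calc H.dist (f u) (f v) ≤ (p.map f).length := dist_le _
    _ = G.dist u v := by rw [Walk.length_map, hp]

namespace IsAcyclic

lemma length_eq_dist_of_isPath (hG : G.IsAcyclic) {p : G.Walk u v} (hp : p.IsPath) :
    p.length = G.dist u v := by
  obtain ⟨q, hq, hql⟩ := p.reachable.exists_path_of_dist
  obtain rfl : p = q := congrArg Subtype.val ((hG.subsingleton_path u v).elim ⟨p, hp⟩ ⟨q, hq⟩)
  exact hql

lemma dist_add_dist_of_mem_support (hG : G.IsAcyclic) {p : G.Walk u v} (hp : p.IsPath)
    {x : V} (hx : x ∈ p.support) : G.dist u x + G.dist x v = G.dist u v := by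
  classical
  rw [← hG.length_eq_dist_of_isPath (hp.takeUntil hx), ← hG.length_eq_dist_of_isPath
    (hp.dropUntil hx), ← hG.length_eq_dist_of_isPath hp, ← Walk.length_append, p.take_spec hx]

lemma dist_getVert_getVert (hG : G.IsAcyclic) {p : G.Walk u v} (hp : p.IsPath) {i j : ℕ}
    (hij : i ≤ j) (hj : j ≤ p.length) : G.dist (p.getVert i) (p.getVert j) = j - i := by
  have h := hG.length_eq_dist_of_isPath ((hp.drop i).take (j - i))
  rw [Walk.take_length, Walk.drop_length, Walk.drop_getVert, Nat.add_sub_cancel' hij] at h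
  omega

end IsAcyclic

lemma IsTree.exists_mem_support_dist_add_dist_eq (hG : G.IsTree) (p : G.Walk u v) (x : V) :
    ∃ y ∈ p.support, ∀ z ∈ p.support, G.dist x y + G.dist y z = G.dist x z := by
  classical
  obtain ⟨y, hy, hmin⟩ := p.support.toFinset.exists_min_image (G.dist x) ⟨u, by simp⟩
  rw [List.mem_toFinset] at hy
  refine ⟨y, hy, fun z hz => ?_⟩
  obtain ⟨r, hr, hrl⟩ := (hG.connected x y).exists_path_of_dist
  set q := ((p.takeUntil y hy).reverse.append (p.takeUntil z hz)).bypass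
  have hq : q.IsPath := Walk.bypass_isPath _
  have hqp : ∀ t ∈ q.support, t ∈ p.support := by
    intro t ht
    have ht' := Walk.support_bypass_subset_support _ ht
    rw [Walk.mem_support_append_iff, Walk.support_reverse, List.mem_reverse] at ht'
    exact ht'.elim (p.support_takeUntil_subset_support hy ·) (p.support_takeUntil_subset_support hz ·)
  -- `y` is a closest vertex of `p` to `x`, so a geodesic from `x` to `y` meets `p` only at `y`.
  have hrp : ∀ t ∈ r.support, t ∈ q.support → t = y := by
    intro t htr htq
    have hsplit := hG.isAcyclic.dist_add_dist_of_mem_support hr htr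
    have hle := hmin t (List.mem_toFinset.mpr (hqp t htq))
    exact (hG.connected.dist_eq_zero_iff).mp (by omega)
  have h := hG.isAcyclic.length_eq_dist_of_isPath (hr.append hq hrp)
  rwa [Walk.length_append, hrl, hG.isAcyclic.length_eq_dist_of_isPath hq] at h

lemma pathGraph_sub_le_length {n : ℕ} {i j : Fin n} (q : (pathGraph n).Walk i j) :
    (j : ℕ) - i ≤ q.length := by
  induction q with
  | nil => simp
  | cons h _ ih =>
    rw [pathGraph_adj] at h
    rw [Walk.length_cons]
    omega

lemma pathGraph_sub_le_dist {n : ℕ} (i j : Fin n) : (j : ℕ) - i ≤ (pathGraph n).dist i j := by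
  obtain ⟨q, hq⟩ := (pathGraph_preconnected n i j).exists_walk_length_eq_dist
  exact hq ▸ pathGraph_sub_le_length q

lemma Iso.sub_one_le_of_forall_dist_le {n k : ℕ} (φ : G ≃g pathGraph n)
    (h : ∀ a b, G.dist a b ≤ k) : n - 1 ≤ k := by
  cases n with
  | zero => simp
  | succ m =>
    have hreach : G.Reachable (φ.symm 0) (φ.symm (Fin.last m)) :=
      (pathGraph_preconnected _ _ _).map φ.symm.toHom
    calc m + 1 - 1 ≤ (pathGraph (m + 1)).dist 0 (Fin.last m) := by
          simpa using pathGraph_sub_le_dist (0 : Fin (m + 1)) (Fin.last m)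
      _ ≤ G.dist (φ.symm 0) (φ.symm (Fin.last m)) := by
          simpa using hreach.dist_map_le φ.toHom
      _ ≤ k := h _ _

lemma Connected.exists_isPath_forall_dist_le [Finite V] (hG : G.Connected) :
    ∃ (u v : V) (p : G.Walk u v), p.IsPath ∧ ∀ a b, G.dist a b ≤ p.length := by
  have := hG.nonempty
  obtain ⟨u, v, huv⟩ := G.exists_dist_eq_diam
  obtain ⟨p, hp, hpl⟩ := hG.exists_path_of_dist u v
  exact ⟨u, v, p, hp, fun a b => hpl ▸ huv ▸ dist_le_diam (connected_iff_ediam_ne_top.mp hG)⟩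

lemma Walk.IsPath.injOn_getVert_range {p : G.Walk u v} (hp : p.IsPath) :
    Set.InjOn p.getVert (range (p.length + 1)) := fun i hi j hj =>
  hp.getVert_injOn (by simp at hi; simp; omega) (by simp at hj; simp; omega)

variable [Fintype V]

lemma IsTree.ecc_getVert (hG : G.IsTree) {p : G.Walk u v} (hp : p.IsPath)
    (hlong : ∀ a b, G.dist a b ≤ p.length) {k : ℕ} (hk : k ≤ p.length) :
    ecc G (p.getVert k) = max k (p.length - k) := by
  have hpos : ∀ {i}, i ≤ p.length →
      G.dist (p.getVert i) u = i ∧ G.dist (p.getVert i) v = p.length - i := fun hi =>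
    ⟨by simpa [dist_comm] using hG.isAcyclic.dist_getVert_getVert hp (Nat.zero_le _) hi,
      by simpa using hG.isAcyclic.dist_getVert_getVert hp hi le_rfl⟩
  refine le_antisymm (ecc_le fun x => ?_) (max_le ?_ ?_)
  · obtain ⟨y, hy, hgate⟩ := hG.exists_mem_support_dist_add_dist_eq p x
    obtain ⟨i, rfl, hi⟩ := Walk.mem_support_iff_exists_getVert.mp hy
    have hki : G.dist (p.getVert k) (p.getVert i) = max k i - min k i := by
      rcases le_total k i with h | h
      · rw [hG.isAcyclic.dist_getVert_getVert hp h hi]; omega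
      · rw [dist_comm, hG.isAcyclic.dist_getVert_getVert hp h hk]; omega
    have htri := hG.connected.dist_triangle (u := p.getVert k) (v := p.getVert i) (w := x)
    rw [dist_comm (u := p.getVert i)] at htri
    have hxu := hgate u p.start_mem_support
    have hxv := hgate v p.end_mem_support
    rw [(hpos hi).1] at hxu
    rw [(hpos hi).2] at hxv
    have := hlong x u
    have := hlong x v
    omega
  · simpa only [(hpos hk).1] using dist_le_ecc G (p.getVert k) u
  · simpa only [(hpos hk).2] using dist_le_ecc G (p.getVert k) v

lemma IsTree.tau_eq_pathTau_add [DecidableEq V] (hG : G.IsTree) {p : G.Walk u v}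
    (hp : p.IsPath) (hlong : ∀ a b, G.dist a b ≤ p.length) :
    tau G = pathTau p.length + ∑ x ∈ ((range (p.length + 1)).image p.getVert)ᶜ, ecc G x := by
  rw [tau, ← sum_add_sum_compl ((range (p.length + 1)).image p.getVert),
    sum_image hp.injOn_getVert_range, pathTau]
  congr 1
  exact sum_congr rfl fun k hk => hG.ecc_getVert hp hlong (by simp at hk; omega)

end SimpleGraph

theorem stmt9 {V : Type*} [Fintype V] (T : SimpleGraph V) (hT : T.IsTree) :
    4 * tau T ≤ 3 * Fintype.card V ^ 2 - 2 * Fintype.card V ∧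
    (Even (Fintype.card V) → Nonempty (T ≃g SimpleGraph.pathGraph (Fintype.card V)) →
      4 * tau T = 3 * Fintype.card V ^ 2 - 2 * Fintype.card V) := by
  classical
  obtain ⟨u, v, p, hp, hlong⟩ := hT.connected.exists_isPath_forall_dist_le
  set S := (range (p.length + 1)).image p.getVert
  have hcompl : #Sᶜ = Fintype.card V - (p.length + 1) := by
    rw [card_compl, card_image_of_injOn hp.injOn_getVert_range, card_range]
  have htau : tau T = pathTau p.length + ∑ x ∈ Sᶜ, ecc T x := hT.tau_eq_pathTau_add hp hlong
  refine ⟨?_, fun heven ⟨φ⟩ => ?_⟩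
  · have hrest : ∑ x ∈ Sᶜ, ecc T x ≤ (Fintype.card V - (p.length + 1)) * p.length :=
      hcompl ▸ sum_le_card_nsmul _ _ _ fun x _ => ecc_le (hlong x)
    have := four_mul_pathTau_add_le hp.length_lt
    omega
  · have hlen : Fintype.card V = p.length + 1 := by
      have := φ.sub_one_le_of_forall_dist_le hlong
      have := hp.length_lt
      omega
    have hS : Sᶜ = ∅ := card_eq_zero.mp (by omega)
    have hmod := four_mul_pathTau_add_mod p.length
    have hpar : (p.length + 1) % 2 = 0 := Nat.even_iff.mp (hlen ▸ heven)
    have hsq : 3 * (p.length + 1) ^ 2 = 3 * p.length ^ 2 + 6 * p.length + 3 := by ring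
    rw [htau, hS, sum_empty, hlen]
    omega
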